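/- If the pair of positive integers (a, b) satisfies the Pell equation a² − d·b² = 1 with a ≥ 2, then the continued fraction expansion of b·√d is [a−1; overline(1, 2(a−1))], i.e., b·√d = (a−1) + 1/β where β = [overline(1, 2(a−1))] is the purely periodic continued fraction with period (1, 2(a−1)). -/

import Mathlib

/-- Iteration of the Gauss-type map producing the complete quotients of the
continued fraction expansion of `α`. -/
noncomputable def cfIter (α : ℝ) : ℕ → ℝ
  | 0 => α
  | n + 1 => (Int.fract (cfIter α n))⁻¹

/-- The `n`-th partial quotient of the continued fraction of `α`. -/
noncomputable def cfTerm (α : ℝ) (n : ℕ) : ℤ := ⌊cfIter α n⌋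

/-!
Write `α = b √d`, so that `α² = a² - 1` and `a - 1 < α < a`. Put `x = α + (a - 1)`. The identity
`(α + a)(α - (a - 1)) = α² - a² + α + a = x` says that the first complete quotient is
`(α - (a - 1))⁻¹ = 1 + x⁻¹`. Since `x > 1`, the next one is `x` itself, and `x` differs from `α` by
an integer, so the one after that is `1 + x⁻¹` again. The partial quotients therefore alternate
between `⌊1 + x⁻¹⌋ = 1` and `⌊x⌋ = 2(a - 1)`.
-/

open Int

theorem cfIter_succ_of_two_cycle {α β γ : ℝ} (h₀ : cfIter α 1 = β) (hβγ : (fract β)⁻¹ = γ)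
    (hγβ : (fract γ)⁻¹ = β) (n : ℕ) : cfIter α (n + 1) = if n % 2 = 0 then β else γ := by
  induction n with
  | zero => simpa using h₀
  | succ m ih =>
    show (fract (cfIter α (m + 1)))⁻¹ = _
    rcases Nat.mod_two_eq_zero_or_one m with hm | hm
    · rw [ih, if_pos hm, hβγ, if_neg (by omega)]
    · rw [ih, if_neg (by omega), hγβ, if_pos (by omega)]

section SqEqSqSubOne

variable {A : ℤ} {α : ℝ}

theorem floor_eq_sub_one_of_sq_eq (hA : 1 ≤ A) (hα : 0 ≤ α) (hαA : α ^ 2 = A ^ 2 - 1) :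
    ⌊α⌋ = A - 1 := by
  have hA' : (1 : ℝ) ≤ A := by exact_mod_cast hA
  rw [floor_eq_iff]
  push_cast
  constructor <;> nlinarith

theorem sub_one_lt_of_sq_eq (hA : 2 ≤ A) (hα : 0 ≤ α) (hαA : α ^ 2 = A ^ 2 - 1) :
    (A : ℝ) - 1 < α := by
  have hA' : (2 : ℝ) ≤ A := by exact_mod_cast hA
  nlinarith

theorem inv_fract_eq_of_sq_eq (hA : 2 ≤ A) (hα : 0 ≤ α) (hαA : α ^ 2 = A ^ 2 - 1) :
    (fract α)⁻¹ = 1 + (α + (A - 1 : ℤ))⁻¹ := by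
  have hlt := sub_one_lt_of_sq_eq hA hα hαA
  have hA' : (2 : ℝ) ≤ A := by exact_mod_cast hA
  rw [fract, floor_eq_sub_one_of_sq_eq (by omega) hα hαA]
  push_cast
  have hpos : 0 < α + (A - 1) := by linarith
  have hne : α - (A - 1) ≠ 0 := by linarith
  field_simp
  linear_combination -hαA

theorem cfTerm_of_sq_eq_sq_sub_one (hA : 2 ≤ A) (hα : 0 ≤ α) (hαA : α ^ 2 = A ^ 2 - 1) :
    cfTerm α 0 = A - 1 ∧
      ∀ n : ℕ, 0 < n → cfTerm α n = if n % 2 = 1 then 1 else 2 * (A - 1) := by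
  have hfloor := floor_eq_sub_one_of_sq_eq (by omega) hα hαA
  set x : ℝ := α + (A - 1 : ℤ) with hx
  have hx_gt : 1 < x := by
    have hA' : (2 : ℝ) ≤ A := by exact_mod_cast hA
    push_cast [hx]
    linarith [sub_one_lt_of_sq_eq hA hα hαA]
  have hx_inv_pos : 0 < x⁻¹ := by positivity
  have hx_inv_lt : x⁻¹ < 1 := inv_lt_one_of_one_lt₀ hx_gt
  have hfract_x : fract (1 + x⁻¹) = x⁻¹ := by
    rw [fract_one_add, fract_eq_self]; exact ⟨hx_inv_pos.le, hx_inv_lt⟩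
  have hfloor_one : ⌊1 + x⁻¹⌋ = 1 := by
    rw [floor_eq_iff]; push_cast; constructor <;> linarith
  have hfloor_x : ⌊x⌋ = 2 * (A - 1) := by rw [hx, floor_add_intCast, hfloor]; ring
  have hcycle := cfIter_succ_of_two_cycle (β := 1 + x⁻¹) (γ := x)
    (inv_fract_eq_of_sq_eq hA hα hαA) (by rw [hfract_x, inv_inv])
    (by rw [hx, fract_add_intCast, inv_fract_eq_of_sq_eq hA hα hαA])
  refine ⟨hfloor, fun n hn => ?_⟩
  obtain ⟨m, rfl⟩ : ∃ m, n = m + 1 := ⟨n - 1, by omega⟩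
  rw [cfTerm, hcycle m]
  rcases Nat.mod_two_eq_zero_or_one m with hm | hm
  · rw [if_pos hm, if_pos (by omega), hfloor_one]
  · rw [if_neg (by omega), if_neg (by omega), hfloor_x]

end SqEqSqSubOne

theorem stmt0 (d : ℕ) (a b : ℕ) (ha : 2 ≤ a)
    (hpell : (a : ℤ) ^ 2 - (d : ℤ) * (b : ℤ) ^ 2 = 1) :
    cfTerm ((b : ℝ) * Real.sqrt d) 0 = (a : ℤ) - 1 ∧
      ∀ n : ℕ, 0 < n →
        cfTerm ((b : ℝ) * Real.sqrt d) n =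
          if n % 2 = 1 then 1 else 2 * ((a : ℤ) - 1) := by
  have hpellR : (a : ℝ) ^ 2 - d * (b : ℝ) ^ 2 = 1 := by exact_mod_cast hpell
  have hsq : ((b : ℝ) * Real.sqrt d) ^ 2 = ((a : ℤ) : ℝ) ^ 2 - 1 := by
    rw [mul_pow, Real.sq_sqrt (Nat.cast_nonneg d)]
    push_cast
    linarith
  exact cfTerm_of_sq_eq_sq_sub_one (by omega) (by positivity) hsq
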